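/- Let f be a positive non-canalyzing Boolean function on {0,1}^n with k relevant variables such that for each variable both restrictions f|_{x_i=0}, f|_{x_i=1} are canalyzing. Then f has at least n+2 extremal points. -/

import Mathlib

/-!
Identify a set `S` of variables with the point `cubePoint S` of the cube whose `true`
coordinates are `S`. Since `f` is positive and not canalyzing, every singleton `{k}` is false
and every co-singleton `{k}ᶜ` is true. A canalyzing restriction `f|_{x_i = 1}` is constant on a
face `x_i = 1, x_j = b`, which forces the pair `{i, j}` to be true; dually `f|_{x_i = 0}` forces
the co-pair `{i, j}ᶜ` to be false. True pairs are minimal true points, false co-pairs are maximal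
false points, and every true pair meets every false co-pair. In three or four variables counting
all pairs gives enough extremal points. In `m ≥ 5` variables a fifth variable outside two
disjoint true pairs would have a false co-pair meeting both, so the true pairs pairwise
intersect; covering every variable, they contain the full star at some variable, and likewise
for the false co-pairs. This yields `2 (m - 1) ≥ m + 2` extremal points.
-/

/-- `f` is positive (monotone): componentwise `x ≤ y` and `f x = 1` imply `f y = 1`. -/
def Positive {n : ℕ} (f : (Fin n → Bool) → Bool) : Prop :=
  ∀ x y : Fin n → Bool, x ≤ y → f x = true → f y = true

/-- `y` is a minimal true point of `f`. -/
def MinOne {n : ℕ} (f : (Fin n → Bool) → Bool) (y : Fin n → Bool) : Prop :=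
  f y = true ∧ ∀ z : Fin n → Bool, z ≤ y → z ≠ y → f z = false

/-- `y` is a maximal false point of `f`. -/
def MaxZero {n : ℕ} (f : (Fin n → Bool) → Bool) (y : Fin n → Bool) : Prop :=
  f y = false ∧ ∀ z : Fin n → Bool, y ≤ z → z ≠ y → f z = true

/-- Variable `i` is relevant for `f`. -/
def Relevant {n : ℕ} (f : (Fin n → Bool) → Bool) (i : Fin n) : Prop :=
  ∃ x : Fin n → Bool, f (Function.update x i false) ≠ f (Function.update x i true)

/-- `f` is canalyzing: fixing some variable to some value makes it constant. -/
def Canalyzing {n : ℕ} (f : (Fin n → Bool) → Bool) : Prop :=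
  ∃ (i : Fin n) (b c : Bool), ∀ x : Fin n → Bool, f (Function.update x i b) = c

/-- The restriction `f|_{x_i = b}`, an `n`-variable function obtained from the
`(n+1)`-variable function `f` by fixing coordinate `i` to `b`. -/
def restrict {n : ℕ} (f : (Fin (n + 1) → Bool) → Bool) (i : Fin (n + 1)) (b : Bool) :
    (Fin n → Bool) → Bool :=
  fun a => f (i.insertNth b a)

open Finset hiding restrict

section Intersecting

variable {α : Type*} [DecidableEq α]

lemma mem_of_pair_mem_of_notMem {E : Finset (Finset α)}
    (hE : ∀ P ∈ E, ∀ Q ∈ E, ¬Disjoint P Q) {P : Finset α} (hP : P ∈ E) {t w : α}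
    (htw : {t, w} ∈ E) (ht : t ∉ P) : w ∈ P := by
  obtain ⟨z, hzP, hz⟩ := not_disjoint_iff.1 (hE P hP _ htw)
  rcases mem_insert.1 hz with rfl | hz
  · exact absurd hzP ht
  · rwa [mem_singleton.1 hz] at hzP

lemma exists_star_of_intersecting [Nonempty α] {E : Finset (Finset α)}
    (hcover : ∀ i, ∃ j, {i, j} ∈ E) (hE : ∀ P ∈ E, ∀ Q ∈ E, ¬Disjoint P Q) :
    ∃ x, ∀ u ≠ x, {x, u} ∈ E := by
  obtain ⟨a⟩ := ‹Nonempty α›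
  obtain ⟨b, hab⟩ := hcover a
  by_cases hstar : ∀ u ≠ a, {a, u} ∈ E
  · exact ⟨a, hstar⟩
  push Not at hstar
  obtain ⟨u, hua, hau⟩ := hstar
  have hub : u ≠ b := by rintro rfl; exact hau hab
  obtain ⟨w, huw⟩ := hcover u
  have hw : w = b := by
    have := mem_of_pair_mem_of_notMem hE hab huw (by simp [hua, hub])
    rcases mem_insert.1 this with rfl | hw
    · exact absurd (pair_comm u w ▸ huw) hau
    · exact mem_singleton.1 hw
  subst hw
  refine ⟨w, fun t htw => ?_⟩
  by_cases hta : t = a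
  · rwa [hta, pair_comm]
  by_cases htu : t = u
  · rwa [htu, pair_comm]
  obtain ⟨z, htz⟩ := hcover t
  have hz₁ := mem_of_pair_mem_of_notMem hE hab htz (by simp [hta, htw])
  have hz₂ := mem_of_pair_mem_of_notMem hE huw htz (by simp [htu, htw])
  have hz : z = w := by grind
  rwa [hz, pair_comm] at htz

lemma intersecting_of_cross_intersecting [Fintype α] (hα : 4 < Fintype.card α)
    {E F : Finset (Finset α)} (hE : ∀ P ∈ E, #P ≤ 2) (hF : ∀ i, ∃ j, {i, j} ∈ F)
    (hEF : ∀ P ∈ E, ∀ Q ∈ F, ¬Disjoint P Q) :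
    ∀ P ∈ E, ∀ Q ∈ E, ¬Disjoint P Q := by
  intro P hP Q hQ hPQ
  obtain ⟨v, -, hv⟩ := exists_mem_notMem_of_card_lt_card (s := P ∪ Q) (t := univ)
    (by grind [card_union_le, hE P hP, hE Q hQ, card_univ])
  obtain ⟨w, hvw⟩ := hF v
  have hwP : w ∈ P := by
    obtain ⟨z, hzP, hz⟩ := not_disjoint_iff.1 (hEF P hP _ hvw)
    grind
  have hwQ : w ∈ Q := by
    obtain ⟨z, hzQ, hz⟩ := not_disjoint_iff.1 (hEF Q hQ _ hvw)
    grind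
  exact disjoint_left.1 hPQ hwP hwQ

lemma card_sub_one_le_card_of_star [Fintype α] {E : Finset (Finset α)} {x : α}
    (hx : ∀ u ≠ x, {x, u} ∈ E) : Fintype.card α - 1 ≤ #E := by
  have hinj : Set.InjOn (fun u => ({x, u} : Finset α)) (univ.erase x) := by
    intro u hu v hv huv
    have hu' : u ∈ ({x, v} : Finset α) := by
      rw [← show ({x, u} : Finset α) = {x, v} from huv]; simp
    grind
  calc Fintype.card α - 1 = #((univ.erase x).image fun u => ({x, u} : Finset α)) := by
        rw [card_image_of_injOn hinj, card_erase_of_mem (mem_univ x), card_univ]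
    _ ≤ #E := card_le_card (by simpa [subset_iff] using hx)

end Intersecting

section CubePoint

variable {α : Type*} [DecidableEq α]

def cubePoint (S : Finset α) : α → Bool := fun a => decide (a ∈ S)

@[simp] lemma cubePoint_apply (S : Finset α) (a : α) : cubePoint S a = decide (a ∈ S) := rfl

lemma cubePoint_le_cubePoint {S T : Finset α} (h : S ⊆ T) : cubePoint S ≤ cubePoint T := by
  intro a
  by_cases ha : a ∈ S
  · simp [ha, h ha]
  · simp [ha]

lemma cubePoint_injective : Function.Injective (cubePoint (α := α)) := by
  intro S T h
  ext a
  simpa using congrFun h a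

lemma update_cubePoint_false (S : Finset α) (a : α) :
    Function.update (cubePoint S) a false = cubePoint (S.erase a) := by
  ext b
  by_cases hb : b = a <;> simp [hb]

lemma update_cubePoint_true (S : Finset α) (a : α) :
    Function.update (cubePoint S) a true = cubePoint (insert a S) := by
  ext b
  by_cases hb : b = a <;> simp [hb]

end CubePoint

namespace Positive

variable {m : ℕ} {f : (Fin m → Bool) → Bool}

lemma eq_false_of_le (hf : Positive f) {x y : Fin m → Bool} (hxy : x ≤ y) (hy : f y = false) :
    f x = false := by
  cases hx : f x
  · rfl
  · simp [hf x y hxy hx] at hy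

lemma minOne_of_update (hf : Positive f) {x : Fin m → Bool} (hx : f x = true)
    (h : ∀ k, x k = true → f (Function.update x k false) = false) : MinOne f x := by
  refine ⟨hx, fun z hzx hne => ?_⟩
  obtain ⟨k, hk⟩ := Function.ne_iff.1 hne
  have hzk : z k = false ∧ x k = true := Bool.lt_iff.1 ((hzx k).lt_of_ne hk)
  refine hf.eq_false_of_le (fun l => ?_) (h k hzk.2)
  by_cases hl : l = k
  · subst hl; simp [hzk.1]
  · simpa [hl] using hzx l

lemma maxZero_of_update (hf : Positive f) {x : Fin m → Bool} (hx : f x = false)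
    (h : ∀ k, x k = false → f (Function.update x k true) = true) : MaxZero f x := by
  refine ⟨hx, fun z hxz hne => ?_⟩
  obtain ⟨k, hk⟩ := Function.ne_iff.1 hne
  have hzk : x k = false ∧ z k = true := Bool.lt_iff.1 ((hxz k).lt_of_ne hk.symm)
  refine hf _ _ (fun l => ?_) (h k hzk.1)
  by_cases hl : l = k
  · subst hl; simp [hzk.2]
  · simpa [hl] using hxz l

lemma apply_cubePoint_singleton (hf : Positive f) (hnc : ¬Canalyzing f) (i : Fin m) :
    f (cubePoint {i}) = false := by
  by_contra h
  refine hnc ⟨i, true, true, fun x => hf _ _ (fun j => ?_) (by simpa using h)⟩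
  by_cases hj : j = i <;> simp [hj]

lemma apply_cubePoint_compl_singleton (hf : Positive f) (hnc : ¬Canalyzing f) (i : Fin m) :
    f (cubePoint {i}ᶜ) = true := by
  by_contra h
  refine hnc ⟨i, false, false, fun x => hf.eq_false_of_le (fun j => ?_) (by simpa using h)⟩
  by_cases hj : j = i <;> simp [hj]

end Positive

section Pairs

variable {m : ℕ} {f : (Fin m → Bool) → Bool}

def truePairs (f : (Fin m → Bool) → Bool) : Finset (Finset (Fin m)) :=
  (powersetCard 2 univ).filter fun P => f (cubePoint P) = true

def falseCopairs (f : (Fin m → Bool) → Bool) : Finset (Finset (Fin m)) :=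
  (powersetCard 2 univ).filter fun P => f (cubePoint Pᶜ) = false

@[simp] lemma mem_truePairs {P : Finset (Fin m)} :
    P ∈ truePairs f ↔ #P = 2 ∧ f (cubePoint P) = true := by
  simp [truePairs]

@[simp] lemma mem_falseCopairs {P : Finset (Fin m)} :
    P ∈ falseCopairs f ↔ #P = 2 ∧ f (cubePoint Pᶜ) = false := by
  simp [falseCopairs]

lemma Positive.minOne_cubePoint (hf : Positive f) (hsingle : ∀ k, f (cubePoint {k}) = false)
    {P : Finset (Fin m)} (hP : #P ≤ 2) (hPf : f (cubePoint P) = true) :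
    MinOne f (cubePoint P) := by
  refine hf.minOne_of_update hPf fun k hk => ?_
  have : Nonempty (Fin m) := ⟨k⟩
  obtain ⟨a, ha⟩ := card_le_one_iff_subset_singleton.1 <| show #(P.erase k) ≤ 1 by
    rw [card_erase_of_mem (by simpa using hk)]; omega
  rw [update_cubePoint_false]
  exact hf.eq_false_of_le (cubePoint_le_cubePoint ha) (hsingle a)

lemma Positive.maxZero_cubePoint_compl (hf : Positive f)
    (hcosingle : ∀ k, f (cubePoint {k}ᶜ) = true) {P : Finset (Fin m)} (hP : #P ≤ 2)
    (hPf : f (cubePoint Pᶜ) = false) : MaxZero f (cubePoint Pᶜ) := by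
  refine hf.maxZero_of_update hPf fun k hk => ?_
  have : Nonempty (Fin m) := ⟨k⟩
  obtain ⟨a, ha⟩ := card_le_one_iff_subset_singleton.1 <| show #(P.erase k) ≤ 1 by
    rw [card_erase_of_mem (by simpa using hk)]; omega
  rw [update_cubePoint_true, ← compl_erase]
  exact hf _ _ (cubePoint_le_cubePoint (compl_subset_compl.2 ha)) (hcosingle a)

lemma Positive.card_truePairs_add_card_falseCopairs_le (hf : Positive f)
    (hsingle : ∀ k, f (cubePoint {k}) = false) (hcosingle : ∀ k, f (cubePoint {k}ᶜ) = true) :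
    #(truePairs f) + #(falseCopairs f) ≤ {y | MinOne f y ∨ MaxZero f y}.ncard := by
  set A := (truePairs f).image cubePoint
  set B := (falseCopairs f).image fun P => cubePoint Pᶜ
  have hdisj : Disjoint A B := by
    simp only [A, B, disjoint_left, mem_image, mem_truePairs, mem_falseCopairs]
    rintro _ ⟨P, ⟨-, hP⟩, rfl⟩ ⟨Q, ⟨-, hQ⟩, hQP⟩
    simp [hQP, hP] at hQ
  have hsub : (↑(A ∪ B) : Set (Fin m → Bool)) ⊆ {y | MinOne f y ∨ MaxZero f y} := by
    simp only [A, B, coe_union, coe_image, Set.union_subset_iff, Set.image_subset_iff]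
    constructor
    · intro P hP
      rw [mem_coe, mem_truePairs] at hP
      exact Or.inl (hf.minOne_cubePoint hsingle hP.1.le hP.2)
    · intro P hP
      rw [mem_coe, mem_falseCopairs] at hP
      exact Or.inr (hf.maxZero_cubePoint_compl hcosingle hP.1.le hP.2)
  calc #(truePairs f) + #(falseCopairs f) = #(A ∪ B) := by
        rw [card_union_of_disjoint hdisj, card_image_of_injective _ cubePoint_injective,
          card_image_of_injective _ fun P Q h => compl_injective (cubePoint_injective h)]
    _ ≤ _ := by
        rw [← Set.ncard_coe_finset]
        exact Set.ncard_le_ncard hsub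

end Pairs

section Restriction

variable {n : ℕ} {f : (Fin (n + 1) → Bool) → Bool}

lemma exists_const_on_face_of_canalyzing_restrict {i : Fin (n + 1)} {b : Bool}
    (h : Canalyzing (restrict f i b)) :
    ∃ j ≠ i, ∃ b' c : Bool, ∀ y, y i = b → y j = b' → f y = c := by
  obtain ⟨j, b', c, hj⟩ := h
  refine ⟨i.succAbove j, i.succAbove_ne j, b', c, fun y hyi hyj => ?_⟩
  have hupd : Function.update (i.removeNth y) j b' = i.removeNth y :=
    Function.update_eq_self_iff.2 hyj.symm
  simpa [restrict, hupd, ← hyi, Fin.insertNth_self_removeNth] using hj (i.removeNth y)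

lemma Positive.exists_pair_mem_truePairs (hf : Positive f)
    (hsingle : ∀ k, f (cubePoint {k}) = false) (hcosingle : ∀ k, f (cubePoint {k}ᶜ) = true)
    {i : Fin (n + 1)}
    (hres : Canalyzing (restrict f i true)) : ∃ j, {i, j} ∈ truePairs f := by
  obtain ⟨j, hji, b, c, hface⟩ := exists_const_on_face_of_canalyzing_restrict hres
  -- The face `x_i = 1, x_j = b` contains the true point `{j}ᶜ` or `univ`, and `{i}` or `{i, j}`:
  -- only `b = c = 1` is consistent.
  cases b <;> cases c
  · simpa [hcosingle j] using hface (cubePoint {j}ᶜ) (by simp [hji.symm]) (by simp)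
  · simpa [hsingle i] using hface (cubePoint {i}) (by simp) (by simp [hji])
  · have := hf _ _ (cubePoint_le_cubePoint (subset_univ {j}ᶜ)) (hcosingle j)
    simpa [this] using hface (cubePoint univ) (by simp) (by simp)
  · refine ⟨j, mem_truePairs.2 ⟨card_pair hji.symm, ?_⟩⟩
    simpa using hface (cubePoint {i, j}) (by simp) (by simp)

lemma Positive.exists_pair_mem_falseCopairs (hf : Positive f)
    (hsingle : ∀ k, f (cubePoint {k}) = false) (hcosingle : ∀ k, f (cubePoint {k}ᶜ) = true)
    {i : Fin (n + 1)}
    (hres : Canalyzing (restrict f i false)) : ∃ j, {i, j} ∈ falseCopairs f := by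
  obtain ⟨j, hji, b, c, hface⟩ := exists_const_on_face_of_canalyzing_restrict hres
  cases b <;> cases c
  · refine ⟨j, mem_falseCopairs.2 ⟨card_pair hji.symm, ?_⟩⟩
    simpa using hface (cubePoint {i, j}ᶜ) (by simp) (by simp)
  · have := hf.eq_false_of_le (cubePoint_le_cubePoint (empty_subset {i})) (hsingle i)
    simpa [this] using hface (cubePoint ∅) (by simp) (by simp)
  · simpa [hcosingle i] using hface (cubePoint {i}ᶜ) (by simp) (by simp [hji])
  · simpa [hsingle j] using hface (cubePoint {j}) (by simp [hji.symm]) (by simp)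

end Restriction

section Counting

variable {m : ℕ} {f : (Fin m → Bool) → Bool}

lemma Positive.not_disjoint_of_mem_truePairs_of_mem_falseCopairs (hf : Positive f)
    {P Q : Finset (Fin m)} (hP : P ∈ truePairs f) (hQ : Q ∈ falseCopairs f) :
    ¬Disjoint P Q := by
  intro hPQ
  rw [mem_truePairs] at hP
  rw [mem_falseCopairs] at hQ
  simp [hf _ _ (cubePoint_le_cubePoint (subset_compl_iff_disjoint_right.2 hPQ)) hP.2] at hQ

lemma Positive.three_le_of_apply_cubePoint (hf : Positive f)
    (hsingle : ∀ k, f (cubePoint {k}) = false) (hcosingle : ∀ k, f (cubePoint {k}ᶜ) = true)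
    (i : Fin m) : 3 ≤ m := by
  by_contra hm
  have : Nonempty (Fin m) := ⟨i⟩
  have hcard : #({i}ᶜ : Finset (Fin m)) ≤ 1 := by
    rw [card_compl, card_singleton, Fintype.card_fin]; omega
  obtain ⟨a, ha⟩ := card_le_one_iff_subset_singleton.1 hcard
  have hi := hcosingle i
  simp [hf.eq_false_of_le (cubePoint_le_cubePoint ha) (hsingle a)] at hi

lemma add_two_le_card_truePairs_add_card_falseCopairs_of_eq_three
    (hsingle : ∀ k, f (cubePoint {k}) = false) (hcosingle : ∀ k, f (cubePoint {k}ᶜ) = true)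
    (hm : m = 3) : m + 2 ≤ #(truePairs f) + #(falseCopairs f) := by
  subst hm
  -- In three variables every pair is the complement of a singleton.
  have hpair : ∀ P ∈ powersetCard 2 (univ : Finset (Fin 3)),
      f (cubePoint P) = true ∧ f (cubePoint Pᶜ) = false := by
    intro P hP
    obtain ⟨a, ha⟩ := card_eq_one.1 <| show #Pᶜ = 1 by
      rw [card_compl, (mem_powersetCard.1 hP).2, Fintype.card_fin]
    obtain rfl : P = {a}ᶜ := by rw [← ha, compl_compl]
    simp [hsingle, hcosingle]
  rw [truePairs, falseCopairs, filter_true_of_mem fun P hP => (hpair P hP).1,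
    filter_true_of_mem fun P hP => (hpair P hP).2, card_powersetCard, card_univ,
    Fintype.card_fin]
  decide

lemma add_two_le_card_truePairs_add_card_falseCopairs_of_eq_four (hm : m = 4) :
    m + 2 ≤ #(truePairs f) + #(falseCopairs f) := by
  subst hm
  -- In four variables the complement of a pair is a pair.
  have hcover : powersetCard 2 univ ⊆ truePairs f ∪ (falseCopairs f).image compl := by
    intro P hP
    have hP2 : #P = 2 := (mem_powersetCard.1 hP).2
    by_cases hPf : f (cubePoint P) = true
    · exact mem_union_left _ (mem_truePairs.2 ⟨hP2, hPf⟩)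
    · refine mem_union_right _ <|
        mem_image.2 ⟨Pᶜ, mem_falseCopairs.2 ⟨?_, ?_⟩, compl_compl P⟩
      · rw [card_compl, hP2, Fintype.card_fin]
      · simpa using hPf
  calc 4 + 2 = #(powersetCard 2 (univ : Finset (Fin 4))) := by simp [Nat.choose]
    _ ≤ #(truePairs f ∪ (falseCopairs f).image compl) := card_le_card hcover
    _ ≤ #(truePairs f) + #((falseCopairs f).image compl) := card_union_le _ _
    _ ≤ #(truePairs f) + #(falseCopairs f) := Nat.add_le_add_left card_image_le _

lemma Positive.add_two_le_card_truePairs_add_card_falseCopairs_of_five_le (hf : Positive f)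
    (hm : 5 ≤ m) (htrue : ∀ i, ∃ j, {i, j} ∈ truePairs f)
    (hfalse : ∀ i, ∃ j, {i, j} ∈ falseCopairs f) :
    m + 2 ≤ #(truePairs f) + #(falseCopairs f) := by
  have : Nonempty (Fin m) := ⟨⟨0, by omega⟩⟩
  have hcard : 4 < Fintype.card (Fin m) := by rw [Fintype.card_fin]; omega
  have htrue_int := intersecting_of_cross_intersecting hcard
    (fun P hP => (mem_truePairs.1 hP).1.le) hfalse
    fun P hP Q hQ => hf.not_disjoint_of_mem_truePairs_of_mem_falseCopairs hP hQ
  have hfalse_int := intersecting_of_cross_intersecting hcard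
    (fun P hP => (mem_falseCopairs.1 hP).1.le) htrue
    fun P hP Q hQ h => hf.not_disjoint_of_mem_truePairs_of_mem_falseCopairs hQ hP h.symm
  obtain ⟨x, hx⟩ := exists_star_of_intersecting htrue htrue_int
  obtain ⟨y, hy⟩ := exists_star_of_intersecting hfalse hfalse_int
  have := card_sub_one_le_card_of_star hx
  have := card_sub_one_le_card_of_star hy
  rw [Fintype.card_fin] at *
  omega

end Counting

theorem extremal_count_non_canalyzing_with_canalyzing_restrictions {n : ℕ}
    (f : (Fin (n + 1) → Bool) → Bool)
    (hf : Positive f) (hnc : ¬ Canalyzing f)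
    (hres : ∀ (i : Fin (n + 1)) (b : Bool), Canalyzing (restrict f i b)) :
    (n + 1) + 2 ≤ {y : Fin (n + 1) → Bool | MinOne f y ∨ MaxZero f y}.ncard := by
  have hsingle := hf.apply_cubePoint_singleton hnc
  have hcosingle := hf.apply_cubePoint_compl_singleton hnc
  refine le_trans ?_ (hf.card_truePairs_add_card_falseCopairs_le hsingle hcosingle)
  obtain h3 | h4 | h5 : n + 1 = 3 ∨ n + 1 = 4 ∨ 5 ≤ n + 1 := by
    have := hf.three_le_of_apply_cubePoint hsingle hcosingle 0
    omega
  · exact add_two_le_card_truePairs_add_card_falseCopairs_of_eq_three hsingle hcosingle h3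
  · exact add_two_le_card_truePairs_add_card_falseCopairs_of_eq_four h4
  · exact hf.add_two_le_card_truePairs_add_card_falseCopairs_of_five_le h5
      (fun i => hf.exists_pair_mem_truePairs hsingle hcosingle (hres i true))
      (fun i => hf.exists_pair_mem_falseCopairs hsingle hcosingle (hres i false))
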